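/- Let t₀ > 0 be defined by the equation cosh(t₀) = t₀·sinh(t₀). Then t₀ exists, is unique, and the function g(t) = t²/(t² + cosh²(t)) on (0,∞) attains its maximum exactly at t = t₀. -/

import Mathlib

/-!
The tangent line to the catenary `y = cosh x` at `x = t` meets the `y`-axis at height
`cosh t - t sinh t`, which strictly decreases from `1` on `[0, ∞)` (its derivative is
`-t cosh t`); so it vanishes at exactly one `t₀ > 0`, the point where the tangent passes
through the origin. The derivative of the slope `cosh t / t` of the ray from the origin is
minus this intercept over `t²`, so that slope is strictly minimal at `t₀`.
Finally `g t = 1 / (1 + (cosh t / t)²)`.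
-/

open Real Set

noncomputable def coshTangentIntercept (t : ℝ) : ℝ := cosh t - t * sinh t

theorem coshTangentIntercept_eq_zero_iff {t : ℝ} :
    coshTangentIntercept t = 0 ↔ cosh t = t * sinh t :=
  sub_eq_zero

theorem continuous_coshTangentIntercept : Continuous coshTangentIntercept := by
  unfold coshTangentIntercept; fun_prop

theorem hasDerivAt_coshTangentIntercept (t : ℝ) :
    HasDerivAt coshTangentIntercept (-(t * cosh t)) t :=
  ((hasDerivAt_cosh t).sub ((hasDerivAt_id' t).mul (hasDerivAt_sinh t))).congr_deriv (by ring)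

theorem strictAntiOn_coshTangentIntercept : StrictAntiOn coshTangentIntercept (Ici 0) := by
  refine strictAntiOn_of_deriv_neg (convex_Ici 0) continuous_coshTangentIntercept.continuousOn
    fun t ht => ?_
  rw [interior_Ici] at ht
  rw [(hasDerivAt_coshTangentIntercept t).deriv, neg_neg_iff_pos]
  exact mul_pos ht (cosh_pos t)

theorem coshTangentIntercept_two_neg : coshTangentIntercept 2 < 0 := by
  have h3 : (3 : ℝ) < exp 2 := by linarith [add_one_lt_exp (two_ne_zero : (2 : ℝ) ≠ 0)]
  have hmul : exp 2 * exp (-2) = 1 := by rw [← exp_add]; norm_num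
  rw [coshTangentIntercept, cosh_eq, sinh_eq]
  nlinarith [exp_pos (-2)]

theorem exists_pos_coshTangentIntercept_eq_zero : ∃ t, 0 < t ∧ coshTangentIntercept t = 0 := by
  have hmem : (0 : ℝ) ∈ Ioo (coshTangentIntercept 2) (coshTangentIntercept 0) :=
    ⟨coshTangentIntercept_two_neg, by simp [coshTangentIntercept]⟩
  obtain ⟨t, ht, ht0⟩ :=
    intermediate_value_Ioo' zero_le_two continuous_coshTangentIntercept.continuousOn hmem
  exact ⟨t, ht.1, ht0⟩

theorem hasDerivAt_cosh_div_self {t : ℝ} (ht : t ≠ 0) :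
    HasDerivAt (fun t => cosh t / t) (-coshTangentIntercept t / t ^ 2) t :=
  ((hasDerivAt_cosh t).div (hasDerivAt_id' t) ht).congr_deriv (by rw [coshTangentIntercept]; ring)

theorem strictAntiOn_cosh_div_self {t₀ : ℝ} (ht₀ : 0 < t₀)
    (hroot : coshTangentIntercept t₀ = 0) : StrictAntiOn (fun t => cosh t / t) (Ioc 0 t₀) := by
  refine strictAntiOn_of_deriv_neg (convex_Ioc 0 t₀)
    (continuous_cosh.continuousOn.div continuousOn_id fun t ht => ht.1.ne') fun t ht => ?_
  rw [interior_Ioc] at ht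
  rw [(hasDerivAt_cosh_div_self ht.1.ne').deriv]
  have hpos : 0 < coshTangentIntercept t := hroot ▸
    strictAntiOn_coshTangentIntercept ht.1.le ht₀.le ht.2
  exact div_neg_of_neg_of_pos (neg_neg_iff_pos.mpr hpos) (pow_pos ht.1 2)

theorem strictMonoOn_cosh_div_self {t₀ : ℝ} (ht₀ : 0 < t₀)
    (hroot : coshTangentIntercept t₀ = 0) : StrictMonoOn (fun t => cosh t / t) (Ici t₀) := by
  refine strictMonoOn_of_deriv_pos (convex_Ici t₀)
    (continuous_cosh.continuousOn.div continuousOn_id fun t ht => (ht₀.trans_le ht).ne')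
    fun t ht => ?_
  rw [interior_Ici] at ht
  have htpos := ht₀.trans ht
  rw [(hasDerivAt_cosh_div_self htpos.ne').deriv]
  have hneg : coshTangentIntercept t < 0 := hroot ▸
    strictAntiOn_coshTangentIntercept ht₀.le htpos.le ht
  exact div_pos (neg_pos.mpr hneg) (pow_pos htpos 2)

theorem cosh_div_self_lt_of_ne {t₀ t : ℝ} (ht₀ : 0 < t₀)
    (hroot : coshTangentIntercept t₀ = 0) (ht : 0 < t) (hne : t ≠ t₀) :
    cosh t₀ / t₀ < cosh t / t := by
  rcases hne.lt_or_gt with hlt | hgt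
  · exact strictAntiOn_cosh_div_self ht₀ hroot ⟨ht, hlt.le⟩ ⟨ht₀, le_rfl⟩ hlt
  · exact strictMonoOn_cosh_div_self ht₀ hroot self_mem_Ici hgt.le hgt

theorem sq_div_sq_add_sq_lt {s t c d : ℝ} (hs : 0 < s) (ht : 0 < t) (hc : 0 < c)
    (h : c / t < d / s) : s ^ 2 / (s ^ 2 + d ^ 2) < t ^ 2 / (t ^ 2 + c ^ 2) := by
  have hcs : c * s < d * t := (div_lt_div_iff₀ ht hs).mp h
  rw [div_lt_div_iff₀ (by positivity) (by positivity)]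
  nlinarith [mul_pos hc hs]

theorem stmt3 :
    (∃! t₀ : ℝ, 0 < t₀ ∧ Real.cosh t₀ = t₀ * Real.sinh t₀) ∧
      ∀ t₀ : ℝ, 0 < t₀ → Real.cosh t₀ = t₀ * Real.sinh t₀ →
        (∀ t : ℝ, 0 < t →
            t ^ 2 / (t ^ 2 + Real.cosh t ^ 2) ≤ t₀ ^ 2 / (t₀ ^ 2 + Real.cosh t₀ ^ 2)) ∧
          ∀ t : ℝ, 0 < t →
            t ^ 2 / (t ^ 2 + Real.cosh t ^ 2) = t₀ ^ 2 / (t₀ ^ 2 + Real.cosh t₀ ^ 2) →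
              t = t₀ := by
  obtain ⟨c, hc, hc0⟩ := exists_pos_coshTangentIntercept_eq_zero
  refine ⟨⟨c, ⟨hc, coshTangentIntercept_eq_zero_iff.mp hc0⟩, fun t ⟨ht, hroot⟩ => ?_⟩,
    fun t₀ ht₀ hroot => ?_⟩
  · exact strictAntiOn_coshTangentIntercept.injOn ht.le hc.le
      ((coshTangentIntercept_eq_zero_iff.mpr hroot).trans hc0.symm)
  have g_lt {t : ℝ} (ht : 0 < t) (hne : t ≠ t₀) :
      t ^ 2 / (t ^ 2 + cosh t ^ 2) < t₀ ^ 2 / (t₀ ^ 2 + cosh t₀ ^ 2) :=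
    sq_div_sq_add_sq_lt ht ht₀ (cosh_pos t₀)
      (cosh_div_self_lt_of_ne ht₀ (coshTangentIntercept_eq_zero_iff.mpr hroot) ht hne)
  refine ⟨fun t ht => ?_, fun t ht heq => ?_⟩
  · rcases eq_or_ne t t₀ with rfl | hne
    · exact le_rfl
    · exact (g_lt ht hne).le
  · by_contra hne
    exact (g_lt ht hne).ne heq
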